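/- If A and B are bounded normal operators on a complex Hilbert space, then ω(A + B) ≤ √2 · ω(|A| + i|B|), where ω is the numerical radius. -/

import Mathlib

/-!
For a normal operator `N` the continuous functional calculus gives `Re N ≤ |N|` in the Loewner
order, because `Re z ≤ |z|` on the spectrum. Applied to `c • A` for a phase `c` aligning
`⟪A x, x⟫` with the positive axis, this yields `|⟪A x, x⟫| ≤ ⟪|A| x, x⟫`. Hence
`|⟪(A + B) x, x⟫| ≤ a + b` with `a = ⟪|A| x, x⟫` and `b = ⟪|B| x, x⟫` real, whereas
`⟪(|A| + i|B|) x, x⟫ = a - i b` has modulus `√(a² + b²) ≥ (a + b) / √2`.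
-/
open scoped InnerProductSpace
open ContinuousLinearMap

variable {H : Type*} [NormedAddCommGroup H] [InnerProductSpace ℂ H] [CompleteSpace H]

/-- The numerical radius of a bounded operator. -/
noncomputable def numRadius (T : H →L[ℂ] H) : ℝ :=
  ⨆ x : {x : H // ‖x‖ = 1}, ‖⟪T x.1, x.1⟫_ℂ‖

/-- The absolute value |A| = (A*A)^(1/2). -/
noncomputable def opAbs (A : H →L[ℂ] H) : H →L[ℂ] H := CFC.sqrt (adjoint A * A)

/-- Real part of the Cartesian decomposition. -/
noncomputable def reP (T : H →L[ℂ] H) : H →L[ℂ] H := (2:ℂ)⁻¹ • (T + adjoint T)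

/-- Imaginary part of the Cartesian decomposition. -/
noncomputable def imP (T : H →L[ℂ] H) : H →L[ℂ] H := (2*Complex.I:ℂ)⁻¹ • (T - adjoint T)

lemma opAbs_eq_abs (A : H →L[ℂ] H) : opAbs A = CFC.abs A := rfl

lemma Complex.re_sub_im_le_sqrt_two_mul_norm (z : ℂ) : z.re - z.im ≤ √2 * ‖z‖ := by
  rw [← Real.sqrt_sq (norm_nonneg z), ← Real.sqrt_mul zero_le_two]
  refine Real.le_sqrt_of_sq_le ?_
  rw [Complex.sq_norm, Complex.normSq_apply]
  nlinarith [sq_nonneg (z.re + z.im)]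

section InnerProductSpace

variable {E : Type*} [NormedAddCommGroup E] [InnerProductSpace ℂ E]

lemma numRadius_nonneg (T : E →L[ℂ] E) : 0 ≤ numRadius T :=
  Real.iSup_nonneg fun _ => norm_nonneg _

lemma bddAbove_range_norm_inner (T : E →L[ℂ] E) :
    BddAbove (Set.range fun x : {x : E // ‖x‖ = 1} => ‖⟪T x.1, x.1⟫_ℂ‖) := by
  refine ⟨‖T‖, ?_⟩
  rintro _ ⟨⟨x, hx⟩, rfl⟩
  calc ‖⟪T x, x⟫_ℂ‖ ≤ ‖T x‖ * ‖x‖ := norm_inner_le_norm _ _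
    _ ≤ ‖T‖ * ‖x‖ * ‖x‖ := by gcongr; exact T.le_opNorm x
    _ = ‖T‖ := by rw [hx, mul_one, mul_one]

lemma numRadius_le_mul_numRadius {S T : E →L[ℂ] E} {C : ℝ} (hC : 0 ≤ C)
    (h : ∀ x, ‖⟪S x, x⟫_ℂ‖ ≤ C * ‖⟪T x, x⟫_ℂ‖) : numRadius S ≤ C * numRadius T :=
  Real.iSup_le (fun x => (h x).trans <| mul_le_mul_of_nonneg_left
    (le_ciSup (bddAbove_range_norm_inner T) x) hC) (mul_nonneg hC (numRadius_nonneg T))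

lemma ContinuousLinearMap.re_inner_le_re_inner_of_le {S T : E →L[ℂ] E} (h : S ≤ T) (x : E) :
    (⟪S x, x⟫_ℂ).re ≤ (⟪T x, x⟫_ℂ).re := by
  have := ((le_def S T).mp h).re_inner_nonneg_left x
  simp only [sub_apply, inner_sub_left, map_sub, RCLike.re_to_complex] at this
  linarith

end InnerProductSpace

lemma IsSelfAdjoint.im_inner_apply_self {S : H →L[ℂ] H} (hS : IsSelfAdjoint S) (x : H) :
    (⟪S x, x⟫_ℂ).im = 0 := by
  rw [← inner_conj_symm, Complex.conj_im, neg_eq_zero]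
  exact hS.isSymmetric.im_inner_self_apply x

lemma re_inner_reP (T : H →L[ℂ] H) (x : H) : (⟪reP T x, x⟫_ℂ).re = (⟪T x, x⟫_ℂ).re := by
  have h : ⟪adjoint T x, x⟫_ℂ = starRingEnd ℂ ⟪T x, x⟫_ℂ := by
    rw [adjoint_inner_left, inner_conj_symm]
  simp only [reP, smul_apply, add_apply, inner_smul_left, inner_add_left, h, Complex.add_conj]
  simp

lemma reP_eq_cfc_re (N : H →L[ℂ] H) [IsStarNormal N] :
    reP N = cfc (fun z : ℂ => (z.re : ℂ)) N := by
  have h : cfc (fun z : ℂ => (z.re : ℂ)) N = cfc (fun z => (2 : ℂ)⁻¹ • (z + star z)) N :=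
    cfc_congr fun z _ => by simp [Complex.re_eq_add_conj, div_eq_inv_mul]
  rw [h, cfc_smul .., cfc_add .., cfc_star, cfc_id' ℂ N, star_eq_adjoint, reP]

open ComplexOrder in
lemma reP_le_abs (N : H →L[ℂ] H) [IsStarNormal N] : reP N ≤ CFC.abs N := by
  rw [reP_eq_cfc_re, CFC.abs_eq_cfcₙ_coe_norm ℂ N, cfcₙ_eq_cfc]
  exact cfc_mono fun z _ => Complex.real_le_real.mpr (Complex.re_le_norm z)

lemma norm_inner_le_re_inner_abs (A : H →L[ℂ] H) [IsStarNormal A] (x : H) :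
    ‖⟪A x, x⟫_ℂ‖ ≤ (⟪CFC.abs A x, x⟫_ℂ).re := by
  set w := ⟪A x, x⟫_ℂ
  -- a phase with `conj c * w = ‖w‖`; junk division makes `c = 0` when `w = 0`
  set c : ℂ := w / ‖w‖
  have hc : ‖c‖ ≤ 1 := by
    simp only [c, norm_div, Complex.norm_real, norm_norm]
    exact div_self_le_one _
  have hcw : ⟪(c • A) x, x⟫_ℂ = ‖w‖ := by
    rw [smul_apply, inner_smul_left]
    rcases eq_or_ne w 0 with hw | hw
    · simp [c, hw]
    · have : (‖w‖ : ℂ) ≠ 0 := by simpa using hw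
      rw [map_div₀, Complex.conj_ofReal, div_mul_eq_mul_div, Complex.conj_mul']
      field_simp
  have habs_nonneg : 0 ≤ (⟪CFC.abs A x, x⟫_ℂ).re :=
    ((nonneg_iff_isPositive _).mp (CFC.abs_nonneg A)).re_inner_nonneg_left x
  calc ‖w‖ = (⟪reP (c • A) x, x⟫_ℂ).re := by rw [re_inner_reP, hcw, Complex.ofReal_re]
    _ ≤ (⟪CFC.abs (c • A) x, x⟫_ℂ).re := re_inner_le_re_inner_of_le (reP_le_abs _) x
    _ = ‖c‖ * (⟪CFC.abs A x, x⟫_ℂ).re := by simp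
    _ ≤ (⟪CFC.abs A x, x⟫_ℂ).re := mul_le_of_le_one_left habs_nonneg hc

lemma re_inner_add_re_inner_le_sqrt_two_mul (S R : H →L[ℂ] H) (hS : IsSelfAdjoint S)
    (hR : IsSelfAdjoint R) (x : H) :
    (⟪S x, x⟫_ℂ).re + (⟪R x, x⟫_ℂ).re ≤ √2 * ‖⟪(S + Complex.I • R) x, x⟫_ℂ‖ := by
  set z := ⟪(S + Complex.I • R) x, x⟫_ℂ
  have hre : z.re = (⟪S x, x⟫_ℂ).re := by simp [z, hR.im_inner_apply_self]
  have him : z.im = -(⟪R x, x⟫_ℂ).re := by simp [z, hS.im_inner_apply_self]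
  linarith [Complex.re_sub_im_le_sqrt_two_mul_norm z]

theorem stmt_8 (A B : H →L[ℂ] H) (hA : A * adjoint A = adjoint A * A)
    (hB : B * adjoint B = adjoint B * B) :
    numRadius (A + B) ≤ Real.sqrt 2 * numRadius (opAbs A + Complex.I • opAbs B) := by
  have : IsStarNormal A := ⟨hA.symm⟩
  have : IsStarNormal B := ⟨hB.symm⟩
  rw [opAbs_eq_abs, opAbs_eq_abs]
  refine numRadius_le_mul_numRadius (Real.sqrt_nonneg 2) fun x => ?_
  calc ‖⟪(A + B) x, x⟫_ℂ‖ ≤ ‖⟪A x, x⟫_ℂ‖ + ‖⟪B x, x⟫_ℂ‖ := by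
        rw [add_apply, inner_add_left]
        exact norm_add_le _ _
    _ ≤ (⟪CFC.abs A x, x⟫_ℂ).re + (⟪CFC.abs B x, x⟫_ℂ).re :=
        add_le_add (norm_inner_le_re_inner_abs A x) (norm_inner_le_re_inner_abs B x)
    _ ≤ _ := re_inner_add_re_inner_le_sqrt_two_mul _ _ (CFC.abs_nonneg A).isSelfAdjoint
        (CFC.abs_nonneg B).isSelfAdjoint x
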